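/- For A_{2n-1}^{(2)}, the auxiliary element a_{\overline{1}}(k) = (-k/[k]^2)( Σ_{i=1}^{n-1} ((q^{(n-i)k} + (-1)^k q^{-(n-i)k})/(q^{nk} + (-1)^k q^{-nk})) a_i(k) + ((q+q^{-1})/(q^{nk}+q^{-nk})) a_n(k) ) satisfies [a_1(k), a_{\overline{1}}(-k)] = 1 at level γ = q, i.e., for even k (where a_n(k) may be nonzero) and odd k separately, given the A_{2n-1}^{(2)} level-one Heisenberg relations [a_i(k), a_j(-k)] = ([k a_{ij}^{(k)}]/k)(q^k - q^{-k})/(q_j - q_j^{-1}) with the appropriate twisted structure constants. -/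

import Mathlib

open Finset

/-!
Only `a_1` and `a_2` pair nontrivially with `a_1`, since `α_1'` is orthogonal to every `α_j'`
with `3 ≤ j ≤ 2n - 3`. With `a = q^k`, `[2k] = (a + a⁻¹)[k]` and `[-k] = -[k]`, the pairing
reduces to `c_{n-1}(a + a⁻¹) - c_{n-2} = c_n`, where `c_j = q^{-jk} + (-1)^k q^{jk}`; this is the
three-term recurrence of twisted hyperbolic cosines.
-/

section

variable {K : Type*} [Field K]

def qNumber (q : K) (m : ℤ) : K := (q ^ m - q ^ (-m)) / (q - q⁻¹)

theorem qNumber_zero (q : K) : qNumber q 0 = 0 := by simp [qNumber]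

theorem qNumber_neg (q : K) (m : ℤ) : qNumber q (-m) = -qNumber q m := by
  simp only [qNumber, neg_neg]
  ring

theorem qNumber_mul_two (q : K) (m : ℤ) :
    qNumber q (m * 2) = (q ^ m + q ^ (-m)) * qNumber q m := by
  rw [qNumber, qNumber, show -(m * 2) = -m * 2 by ring, zpow_mul, zpow_mul]
  norm_cast
  ring

def twistedCosh (q ε : K) (m j : ℤ) : K := q ^ (j * m) + ε * q ^ (-(j * m))

theorem twistedCosh_succ_add_pred {q : K} (hq : q ≠ 0) (ε : K) (m j : ℤ) :
    twistedCosh q ε m (j + 1) + twistedCosh q ε m (j - 1) =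
      (q ^ m + q ^ (-m)) * twistedCosh q ε m j := by
  simp only [twistedCosh, add_mul, sub_mul, one_mul, neg_add, neg_sub, zpow_add₀ hq,
    zpow_sub₀ hq, zpow_neg]
  field_simp
  ring

theorem twistedCosh_pred_div_mul_sub_div {q ε : K} (hq : q ≠ 0) {m N : ℤ}
    (hN : twistedCosh q ε m N ≠ 0) :
    twistedCosh q ε m (N - 1) / twistedCosh q ε m N * (q ^ m + q ^ (-m)) -
      twistedCosh q ε m (N - 2) / twistedCosh q ε m N = 1 := by
  have hrec := twistedCosh_succ_add_pred hq ε m (N - 1)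
  rw [sub_add_cancel, sub_sub, one_add_one_eq_two] at hrec
  rw [div_mul_eq_mul_div, div_sub_div_same, div_eq_one_iff_eq hN]
  linear_combination -hrec

end

theorem sum_Icc_one_eq_add_of_eq_zero {M : Type*} [AddCommMonoid M] {f : ℕ → M} {N : ℕ}
    (hN : 2 ≤ N) (hf : ∀ i, 3 ≤ i → i ≤ N → f i = 0) :
    ∑ i ∈ Icc 1 N, f i = f 1 + f 2 := by
  rw [← sum_pair (by norm_num : (1 : ℕ) ≠ 2)]
  refine (sum_subset (fun i hi => ?_) fun i hi hi' => ?_).symm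
  · simp only [mem_insert, mem_singleton] at hi
    rw [mem_Icc]
    omega
  · simp only [mem_insert, mem_singleton, mem_Icc, not_or] at hi hi'
    exact hf i (by omega) hi.2

theorem A2n1_dual_boson_general {K : Type*} [Field K] [CharZero K] (q : K)
    (hq0 : q ≠ 0)
    (n : ℕ) (hn : 3 ≤ n) (k : ℤ) (hk : k ≠ 0)
    (br : ℤ → K) (hbr : ∀ m, br m = (q ^ m - q ^ (-m)) / (q - q⁻¹))
    (hbrk : br (-k) ≠ 0)
    (hden1 : q ^ ((n : ℤ) * (-k)) + (-1 : K) ^ (-k) * q ^ (-((n : ℤ) * (-k))) ≠ 0)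
    (pr : ℕ → ℤ) (hpr : ∀ j, pr j = if j = 1 then 2 else if j = 2 then -1 else 0)
    (qd : ℕ → K) (hqd : ∀ j, qd j = if j = n then q ^ 2 else q)
    (c1 : ℕ → K)
    (hc1 : ∀ j, c1 j =
      ((br (k * pr j) + (-1 : K) ^ k * br (k * pr (2*n - j))) / (k : K)) *
        ((q ^ k - q ^ (-k)) / (qd j - (qd j)⁻¹)))
    (cA : ℕ → K)
    (hcA : ∀ i, cA i =
      (q ^ (((n : ℤ) - (i : ℤ)) * (-k)) +
        (-1 : K) ^ (-k) * q ^ (-(((n : ℤ) - (i : ℤ)) * (-k)))) /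
      (q ^ ((n : ℤ) * (-k)) + (-1 : K) ^ (-k) * q ^ (-((n : ℤ) * (-k)))))
    (cB : K) :
    ((k : K) / (br (-k)) ^ 2) *
      ((∑ i ∈ Icc 1 (n-1), cA i * c1 i) + cB * c1 n) = 1 := by
  obtain rfl : br = qNumber q := funext hbr
  have hc1_eq_zero : ∀ j, 3 ≤ j → j ≤ n → c1 j = 0 := by
    intro j h3 hjn
    rw [hc1, hpr, hpr, if_neg (by omega), if_neg (by omega), if_neg (by omega),
      if_neg (by omega)]
    simp [qNumber_zero]
  have hsum : ∑ i ∈ Icc 1 (n - 1), cA i * c1 i = cA 1 * c1 1 + cA 2 * c1 2 :=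
    sum_Icc_one_eq_add_of_eq_zero (by omega) fun i hi _ => by
      rw [hc1_eq_zero i hi (by omega), mul_zero]
  have hc1_one : c1 1 = (q ^ k + q ^ (-k)) * qNumber q k ^ 2 / k := by
    rw [hc1, hpr, hpr, hqd, if_pos rfl, if_neg (by omega), if_neg (by omega),
      if_neg (by omega), mul_zero, qNumber_zero, qNumber_mul_two]
    simp only [qNumber]
    ring
  have hc1_two : c1 2 = -qNumber q k ^ 2 / k := by
    rw [hc1, hpr, hpr, hqd, if_neg (by omega), if_pos rfl, if_neg (by omega),
      if_neg (by omega), if_neg (by omega), mul_zero, qNumber_zero, mul_neg_one,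
      qNumber_neg]
    simp only [qNumber]
    ring
  have hcA_rec : cA 1 * (q ^ (-k) + q ^ (-(-k))) - cA 2 = 1 := by
    rw [hcA, hcA, Nat.cast_one, Nat.cast_ofNat]
    exact twistedCosh_pred_div_mul_sub_div hq0 hden1
  rw [neg_neg] at hcA_rec
  rw [hsum, hc1_eq_zero n hn le_rfl, mul_zero, add_zero, hc1_one, hc1_two, qNumber_neg]
  rw [qNumber_neg, neg_ne_zero] at hbrk
  field_simp
  linear_combination hcA_rec

/-- For `A_{2n-1}^{(2)}` at level one (`γ = q`), the auxiliary element
`a_{1̄}(k) = (-k/[k]²)(Σ_{i=1}^{n-1} ((q^{(n-i)k}+(-1)^k q^{-(n-i)k})/(q^{nk}+(-1)^k q^{-nk})) a_i(k)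
  + ((q+q⁻¹)/(q^{nk}+q^{-nk})) a_n(k))`
satisfies `[a_1(k), a_{1̄}(-k)] = 1`: as a rational-function identity, the combination of
the level-one Heisenberg structure constants `c_1(j) = [a_1(k), a_j(-k)]` equals `1`. -/
theorem A2n1_dual_boson {K : Type*} [Field K] [CharZero K] (q : K)
    (hq0 : q ≠ 0) (hq1 : q - q⁻¹ ≠ 0) (hq2 : q ^ 2 - (q ^ 2)⁻¹ ≠ 0)
    (n : ℕ) (hn : 3 ≤ n) (k : ℤ) (hk : k ≠ 0)
    (br : ℤ → K) (hbr : ∀ m, br m = (q ^ m - q ^ (-m)) / (q - q⁻¹))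
    (hbrk : br (-k) ≠ 0)
    (hden1 : q ^ ((n : ℤ) * (-k)) + (-1 : K) ^ (-k) * q ^ (-((n : ℤ) * (-k))) ≠ 0)
    (hden2 : q ^ ((n : ℤ) * (-k)) + q ^ (-((n : ℤ) * (-k))) ≠ 0)
    (pr : ℕ → ℤ) (hpr : ∀ j, pr j = if j = 1 then 2 else if j = 2 then -1 else 0)
    (qd : ℕ → K) (hqd : ∀ j, qd j = if j = n then q ^ 2 else q)
    (c1 : ℕ → K)
    (hc1 : ∀ j, c1 j =
      ((br (k * pr j) + (-1 : K) ^ k * br (k * pr (2*n - j))) / (k : K)) *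
        ((q ^ k - q ^ (-k)) / (qd j - (qd j)⁻¹)))
    (cA : ℕ → K)
    (hcA : ∀ i, cA i =
      (q ^ (((n : ℤ) - (i : ℤ)) * (-k)) +
        (-1 : K) ^ (-k) * q ^ (-(((n : ℤ) - (i : ℤ)) * (-k)))) /
      (q ^ ((n : ℤ) * (-k)) + (-1 : K) ^ (-k) * q ^ (-((n : ℤ) * (-k)))))
    (cB : K)
    (hcB : cB = (q + q⁻¹) / (q ^ ((n : ℤ) * (-k)) + q ^ (-((n : ℤ) * (-k))))) :
    ((k : K) / (br (-k)) ^ 2) *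
      ((∑ i ∈ Icc 1 (n-1), cA i * c1 i) + cB * c1 n) = 1 :=
  A2n1_dual_boson_general q hq0 n hn k hk br hbr hbrk hden1 pr hpr qd hqd c1 hc1 cA hcA cB
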